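/- arXiv:2502.02325 — 3 statements merged into one kernel-verified Lean document; each statement's English description precedes it below -/
import Mathlib

section
/- Let H be a complex Hilbert space and A a bounded self-adjoint operator on H. For every λ ∈ ℝ the operator 1 + λ² + A² is invertible in the algebra of bounded operators on H, the function λ ↦ A(1 + λ² + A²)^{-1} is Bochner integrable on (0, ∞) with values in the bounded operators, and (2/π)·∫₀^∞ A(1 + λ² + A²)^{-1} dλ = A·(1 + A²)^{-1/2}, where (1 + A²)^{-1/2} is defined by continuous functional calculus (equivalently, the right-hand side is the continuous functional calculus of the function x ↦ x(1+x²)^{-1/2} applied to A). -/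
open MeasureTheory Set Filter

private lemma scalar_integrableOn (x : ℝ) :
    IntegrableOn (fun lam : ℝ => x / (1 + lam ^ 2 + x ^ 2)) (Ioi 0) volume := by
  have hg : Integrable (fun lam : ℝ => |x| * (1 + lam ^ 2)⁻¹) volume :=
    integrable_inv_one_add_sq.const_mul |x|
  refine (hg.restrict (s := Ioi 0)).mono' ?_ ?_
  · refine (Continuous.div continuous_const (by fun_prop) fun lam => by positivity).aestronglyMeasurable
  · filter_upwards with lam
    rw [Real.norm_eq_abs, abs_div, abs_of_pos (by positivity : (0:ℝ) < 1 + lam ^ 2 + x ^ 2),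
      ← div_eq_mul_inv]
    exact div_le_div₀ (abs_nonneg x) le_rfl (by positivity) (by nlinarith [sq_nonneg x])

private lemma scalar_integral (x : ℝ) :
    ∫ lam in Ioi (0:ℝ), x / (1 + lam ^ 2 + x ^ 2) =
      (Real.pi / 2) * (x / Real.sqrt (1 + x ^ 2)) := by
  set c : ℝ := Real.sqrt (1 + x ^ 2) with hc
  have hc0 : 0 < c := Real.sqrt_pos.mpr (by positivity)
  have hc2 : c ^ 2 = 1 + x ^ 2 := Real.sq_sqrt (by positivity)
  have hderiv : ∀ lam ∈ Ici (0:ℝ),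
      HasDerivAt (fun lam : ℝ => (x / c) * Real.arctan (lam / c))
        (x / (1 + lam ^ 2 + x ^ 2)) lam := by
    intro lam _
    have h1 : HasDerivAt (fun lam : ℝ => lam / c) (1 / c) lam := by
      simpa using (hasDerivAt_id lam).div_const c
    have h2 := (Real.hasDerivAt_arctan (lam / c)).comp lam h1
    have h3 := h2.const_mul (x / c)
    refine h3.congr_deriv ?_
    have hd : (0:ℝ) < 1 + (lam / c) ^ 2 := by positivity
    have hcne : c ≠ 0 := hc0.ne'
    rw [div_pow, hc2]
    field_simp
    rw [hc2]
    ring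
  have htop : Tendsto (fun lam : ℝ => (x / c) * Real.arctan (lam / c)) atTop
      (nhds ((x / c) * (Real.pi / 2))) := by
    have h1 : Tendsto (fun lam : ℝ => lam / c) atTop atTop :=
      tendsto_id.atTop_div_const hc0
    exact ((Real.tendsto_arctan_atTop.mono_right nhdsWithin_le_nhds).comp h1).const_mul _
  rw [integral_Ioi_of_hasDerivAt_of_tendsto' hderiv (scalar_integrableOn x) htop]
  simp [Real.arctan_zero]
  ring

/-- Let `A` be a bounded self-adjoint operator on a complex Hilbert space `H`. For every
`λ ∈ ℝ` the operator `1 + λ² + A²` is invertible, the function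
`λ ↦ A(1 + λ² + A²)⁻¹` is Bochner integrable on `(0, ∞)`, and
`(2/π)·∫₀^∞ A(1 + λ² + A²)⁻¹ dλ = A(1 + A²)^{-1/2}`, the right hand side being the
continuous functional calculus of `x ↦ x(1+x²)^{-1/2}` applied to `A`. -/
theorem integral_repr_F_operator {H : Type*} [NormedAddCommGroup H]
    [InnerProductSpace ℂ H] [CompleteSpace H] (A : H →L[ℂ] H)
    (hA : IsSelfAdjoint A) :
    (∀ lam : ℝ, IsUnit ((1 + lam ^ 2 : ℝ) • (1 : H →L[ℂ] H) + A ^ 2)) ∧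
    IntegrableOn
      (fun lam : ℝ => A * Ring.inverse ((1 + lam ^ 2 : ℝ) • (1 : H →L[ℂ] H) + A ^ 2))
      (Ioi 0) volume ∧
    (2 / Real.pi) •
        ∫ lam in Ioi (0 : ℝ),
          A * Ring.inverse ((1 + lam ^ 2 : ℝ) • (1 : H →L[ℂ] H) + A ^ 2) =
      cfc (fun x : ℝ => x / Real.sqrt (1 + x ^ 2)) A := by
  set μ : Measure ℝ := volume.restrict (Ioi 0) with hμ
  have hcontg : ∀ lam : ℝ, ContinuousOn (fun x : ℝ => 1 + lam ^ 2 + x ^ 2) (spectrum ℝ A) :=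
    fun lam => (by fun_prop : Continuous fun x : ℝ => 1 + lam ^ 2 + x ^ 2).continuousOn
  have hne : ∀ lam : ℝ, ∀ x ∈ spectrum ℝ A, (1 + lam ^ 2 + x ^ 2) ≠ 0 :=
    fun lam x _ => by positivity
  have h1 : ∀ lam : ℝ, cfc (fun x : ℝ => 1 + lam ^ 2 + x ^ 2) A
      = (1 + lam ^ 2 : ℝ) • (1 : H →L[ℂ] H) + A ^ 2 := by
    intro lam
    rw [cfc_const_add ((1:ℝ) + lam ^ 2) (fun x : ℝ => x ^ 2) A
        (by fun_prop : Continuous fun x : ℝ => x ^ 2).continuousOn hA,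
      cfc_pow_id A 2 hA, Algebra.algebraMap_eq_smul_one]
  have hunit : ∀ lam : ℝ, IsUnit ((1 + lam ^ 2 : ℝ) • (1 : H →L[ℂ] H) + A ^ 2) := by
    intro lam
    rw [← h1 lam]
    exact isUnit_cfc _ A (hcontg lam) hA (hne lam)
  have h2 : ∀ lam : ℝ, A * Ring.inverse ((1 + lam ^ 2 : ℝ) • (1 : H →L[ℂ] H) + A ^ 2)
      = cfc (fun x : ℝ => x / (1 + lam ^ 2 + x ^ 2)) A := by
    intro lam
    have := cfc_map_div (fun x : ℝ => x) (fun x : ℝ => 1 + lam ^ 2 + x ^ 2) A (hne lam)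
      continuousOn_id (hcontg lam) hA
    rw [cfc_id' ℝ A hA, h1 lam] at this
    exact this.symm
  -- spectrum bound
  have hz : ∀ z ∈ spectrum ℝ A, |z| ≤ ‖A‖ := by
    intro z hz
    calc |z| = ‖z‖ := (Real.norm_eq_abs z).symm
    _ ≤ ‖A‖ * ‖(1 : H →L[ℂ] H)‖ := spectrum.norm_le_norm_mul_of_mem hz
    _ ≤ ‖A‖ * 1 := by
        exact mul_le_mul_of_nonneg_left ContinuousLinearMap.norm_id_le (norm_nonneg A)
    _ = ‖A‖ := mul_one _
  have hf : Continuous (Function.uncurry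
      fun lam : ℝ => (spectrum ℝ A).restrict fun x : ℝ => x / (1 + lam ^ 2 + x ^ 2)) := by
    apply Continuous.div
    · fun_prop
    · fun_prop
    · rintro ⟨lam, x⟩; positivity
  have hbound : ∀ lam : ℝ, ∀ z ∈ spectrum ℝ A,
      ‖z / (1 + lam ^ 2 + z ^ 2)‖ ≤ ‖‖A‖ * (1 + lam ^ 2)⁻¹‖ := by
    intro lam z hzs
    rw [Real.norm_eq_abs, Real.norm_eq_abs, abs_div,
      abs_of_pos (by positivity : (0:ℝ) < 1 + lam ^ 2 + z ^ 2),
      abs_of_nonneg (by positivity : (0:ℝ) ≤ ‖A‖ * (1 + lam ^ 2)⁻¹), ← div_eq_mul_inv]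
    exact div_le_div₀ (norm_nonneg A) (hz z hzs) (by positivity) (by nlinarith [sq_nonneg z])
  have hfin : HasFiniteIntegral (fun lam : ℝ => ‖A‖ * (1 + lam ^ 2)⁻¹) μ :=
    ((integrable_inv_one_add_sq.const_mul ‖A‖).restrict (s := Ioi 0)).hasFiniteIntegral
  have key := cfc_integral (μ := μ) (fun lam x : ℝ => x / (1 + lam ^ 2 + x ^ 2))
    (fun lam : ℝ => ‖A‖ * (1 + lam ^ 2)⁻¹) A
    ((Continuous.div (by fun_prop) (by fun_prop) fun p => by positivity).continuousOn)
    (.of_forall fun lam z hzs => (hbound lam z hzs).trans (le_of_eq (Real.norm_of_nonneg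
      (by positivity)))) hfin hA
  -- integrability of the operator valued function
  have hcont' : ∀ lam : ℝ, ContinuousOn (fun x : ℝ => x / (1 + lam ^ 2 + x ^ 2))
      (spectrum ℝ A) :=
    fun lam => ContinuousOn.div continuousOn_id (hcontg lam) (hne lam)
  let fc : ℝ → C(spectrum ℝ A, ℝ) := fun lam => ⟨_, (hcont' lam).restrict⟩
  have hfc_cont : Continuous fc := ContinuousMap.continuous_of_continuous_uncurry fc hf
  have hfc_int : Integrable fc μ := by
    refine ⟨hfc_cont.aestronglyMeasurable, hfin.mono <| .of_forall fun lam => ?_⟩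
    rw [ContinuousMap.norm_le _ (norm_nonneg _)]
    exact fun z => hbound lam z.1 z.2
  have h3 : (fun lam : ℝ => cfc (fun x : ℝ => x / (1 + lam ^ 2 + x ^ 2)) A)
      = fun lam => cfcL (R := ℝ) hA (fc lam) :=
    funext fun lam => cfc_eq_cfcL hA (hcont' lam)
  have hint : Integrable (fun lam : ℝ => cfc (fun x : ℝ => x / (1 + lam ^ 2 + x ^ 2)) A) μ := by
    rw [h3]
    exact (cfcL (R := ℝ) hA).integrable_comp hfc_int
  have hIO : IntegrableOn
      (fun lam : ℝ => A * Ring.inverse ((1 + lam ^ 2 : ℝ) • (1 : H →L[ℂ] H) + A ^ 2))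
      (Ioi 0) volume := by
    have heq : (fun lam : ℝ => A * Ring.inverse ((1 + lam ^ 2 : ℝ) • (1 : H →L[ℂ] H) + A ^ 2))
        = fun lam : ℝ => cfc (fun x : ℝ => x / (1 + lam ^ 2 + x ^ 2)) A := funext h2
    rw [IntegrableOn, ← hμ, heq]
    exact hint
  refine ⟨hunit, hIO, ?_⟩
  have hg : ContinuousOn (fun x : ℝ => x / Real.sqrt (1 + x ^ 2)) (spectrum ℝ A) := by
    apply ContinuousOn.div continuousOn_id
    · exact (Real.continuous_sqrt.comp (by fun_prop)).continuousOn
    · intro x _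
      exact ne_of_gt (Real.sqrt_pos.mpr (by positivity))
  calc (2 / Real.pi) • ∫ lam in Ioi (0 : ℝ),
          A * Ring.inverse ((1 + lam ^ 2 : ℝ) • (1 : H →L[ℂ] H) + A ^ 2)
      = (2 / Real.pi) • ∫ lam, cfc (fun x : ℝ => x / (1 + lam ^ 2 + x ^ 2)) A ∂μ := by
        rw [← hμ]; congr 1; exact integral_congr_ae (.of_forall h2)
    _ = (2 / Real.pi) • cfc (fun r : ℝ => ∫ lam, r / (1 + lam ^ 2 + r ^ 2) ∂μ) A := by
        rw [key]
    _ = (2 / Real.pi) • cfc (fun r : ℝ => (Real.pi / 2) * (r / Real.sqrt (1 + r ^ 2))) A := by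
        congr 1
        apply cfc_congr
        intro r _
        rw [hμ]
        exact scalar_integral r
    _ = cfc (fun x : ℝ => x / Real.sqrt (1 + x ^ 2)) A := by
        rw [cfc_const_mul (Real.pi / 2) _ A hg, smul_smul,
          div_mul_div_comm, mul_comm (2:ℝ) Real.pi, div_self (by positivity), one_smul]
end

section
/- For all real numbers a and b, the integrand λ ↦ (1 + λ² − ab)/((1 + λ² + a²)(1 + λ² + b²)) is integrable on (0, ∞) and (a − b)·(2/π)·∫₀^∞ (1 + λ² − ab)/((1 + λ² + a²)(1 + λ² + b²)) dλ = a/√(1 + a²) − b/√(1 + b²). Equivalently, the difference of the integral representations F(a) − F(b) for F(x) = x(1 + x²)^{-1/2} factors as (a − b) times this integral. -/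
open MeasureTheory Set

lemma aux_deriv (c : ℝ) (hc : 0 < c) (x : ℝ) :
    HasDerivAt (fun t : ℝ => (1 / c) * Real.arctan (t / c)) ((c ^ 2 + x ^ 2)⁻¹) x := by
  have h1 : HasDerivAt (fun t : ℝ => t / c) (1 / c) x := (hasDerivAt_id x).div_const c
  have h2 := (h1.arctan).const_mul (1 / c)
  refine h2.congr_deriv ?_
  have h3 : (1 : ℝ) + (x / c) ^ 2 ≠ 0 := by positivity
  have hc0 : c ≠ 0 := hc.ne'
  field_simp

lemma aux_int (c : ℝ) (hc : 0 < c) :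
    IntegrableOn (fun x : ℝ => (c ^ 2 + x ^ 2)⁻¹) (Ioi 0) volume ∧
      ∫ x in Ioi (0 : ℝ), (c ^ 2 + x ^ 2)⁻¹ = Real.pi / (2 * c) := by
  have hderiv : ∀ x ∈ Ici (0 : ℝ),
      HasDerivAt (fun t : ℝ => (1 / c) * Real.arctan (t / c)) ((c ^ 2 + x ^ 2)⁻¹) x :=
    fun x _ => aux_deriv c hc x
  have hpos : ∀ x ∈ Ioi (0 : ℝ), (0 : ℝ) ≤ (c ^ 2 + x ^ 2)⁻¹ := fun x _ => by positivity
  have htend : Filter.Tendsto (fun t : ℝ => (1 / c) * Real.arctan (t / c)) Filter.atTop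
      (nhds ((1 / c) * (Real.pi / 2))) := by
    refine Filter.Tendsto.const_mul _ ?_
    exact (tendsto_nhds_of_tendsto_nhdsWithin Real.tendsto_arctan_atTop).comp
      (Filter.tendsto_id.atTop_div_const hc)
  refine ⟨integrableOn_Ioi_deriv_of_nonneg' hderiv hpos htend, ?_⟩
  rw [integral_Ioi_of_hasDerivAt_of_nonneg' hderiv hpos htend]
  simp [Real.arctan_zero]
  ring

/-- For all real `a, b`, the function `λ ↦ (1 + λ² − ab)/((1 + λ² + a²)(1 + λ² + b²))`
is integrable on `(0, ∞)` and
`(a − b)·(2/π)·∫₀^∞ (1 + λ² − ab)/((1 + λ² + a²)(1 + λ² + b²)) dλ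
  = a/√(1 + a²) − b/√(1 + b²)`. -/
theorem integral_repr_F_difference (a b : ℝ) :
    IntegrableOn
      (fun lam : ℝ => (1 + lam ^ 2 - a * b) / ((1 + lam ^ 2 + a ^ 2) * (1 + lam ^ 2 + b ^ 2)))
      (Ioi 0) volume ∧
    (a - b) * ((2 / Real.pi) *
        ∫ lam in Ioi (0 : ℝ),
          (1 + lam ^ 2 - a * b) / ((1 + lam ^ 2 + a ^ 2) * (1 + lam ^ 2 + b ^ 2))) =
      a / Real.sqrt (1 + a ^ 2) - b / Real.sqrt (1 + b ^ 2) := by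
  set ca := Real.sqrt (1 + a ^ 2) with hca
  set cb := Real.sqrt (1 + b ^ 2) with hcb
  have hcapos : 0 < ca := Real.sqrt_pos.2 (by positivity)
  have hcbpos : 0 < cb := Real.sqrt_pos.2 (by positivity)
  have hca2 : ca ^ 2 = 1 + a ^ 2 := Real.sq_sqrt (by positivity)
  have hcb2 : cb ^ 2 = 1 + b ^ 2 := Real.sq_sqrt (by positivity)
  have hda : ∀ lam : ℝ, (0 : ℝ) < 1 + lam ^ 2 + a ^ 2 := fun lam => by positivity
  have hdb : ∀ lam : ℝ, (0 : ℝ) < 1 + lam ^ 2 + b ^ 2 := fun lam => by positivity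
  -- integrability of the main integrand
  have hint : IntegrableOn
      (fun lam : ℝ => (1 + lam ^ 2 - a * b) / ((1 + lam ^ 2 + a ^ 2) * (1 + lam ^ 2 + b ^ 2)))
      (Ioi 0) volume := by
    have hmeas : AEStronglyMeasurable
        (fun lam : ℝ => (1 + lam ^ 2 - a * b) / ((1 + lam ^ 2 + a ^ 2) * (1 + lam ^ 2 + b ^ 2)))
        (volume.restrict (Ioi 0)) := by
      apply Continuous.aestronglyMeasurable
      exact Continuous.div (by continuity) (by continuity)
        (fun lam => by positivity)
    have hmaj : Integrable (fun lam : ℝ => (1 + |a * b|) * (1 + lam ^ 2)⁻¹)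
        (volume.restrict (Ioi 0)) :=
      (integrable_inv_one_add_sq.restrict.const_mul _)
    refine hmaj.mono' hmeas (Filter.Eventually.of_forall fun lam => ?_)
    have h1 : (0 : ℝ) < 1 + lam ^ 2 := by positivity
    rw [Real.norm_eq_abs, abs_div, abs_of_pos (mul_pos (hda lam) (hdb lam)),
      div_le_iff₀ (mul_pos (hda lam) (hdb lam))]
    have hnum : |1 + lam ^ 2 - a * b| ≤ (1 + |a * b|) * (1 + lam ^ 2) := by
      calc |1 + lam ^ 2 - a * b| ≤ |1 + lam ^ 2| + |a * b| := abs_sub _ _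
        _ = (1 + lam ^ 2) + |a * b| := by rw [abs_of_pos h1]
        _ ≤ (1 + |a * b|) * (1 + lam ^ 2) := by nlinarith [abs_nonneg (a * b), sq_nonneg lam]
    calc |1 + lam ^ 2 - a * b| ≤ (1 + |a * b|) * (1 + lam ^ 2) := hnum
      _ ≤ (1 + |a * b|) * (1 + lam ^ 2)⁻¹ * ((1 + lam ^ 2 + a ^ 2) * (1 + lam ^ 2 + b ^ 2)) := by
        rw [mul_assoc, mul_le_mul_iff_right₀ (by positivity : (0:ℝ) < 1 + |a * b|)]
        have h2 : (1 + lam ^ 2) * (1 + lam ^ 2)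
            ≤ (1 + lam ^ 2 + a ^ 2) * (1 + lam ^ 2 + b ^ 2) := by nlinarith [sq_nonneg a, sq_nonneg b, sq_nonneg (a*b)]
        calc 1 + lam ^ 2 = (1 + lam ^ 2)⁻¹ * ((1 + lam ^ 2) * (1 + lam ^ 2)) := by field_simp
          _ ≤ _ := mul_le_mul_of_nonneg_left h2 (by positivity)
  refine ⟨hint, ?_⟩
  -- single-term integrability and values
  obtain ⟨hia, hva⟩ := aux_int ca hcapos
  obtain ⟨hib, hvb⟩ := aux_int cb hcbpos
  have hfa : ∀ lam : ℝ, (ca ^ 2 + lam ^ 2)⁻¹ = (1 + lam ^ 2 + a ^ 2)⁻¹ := fun lam => by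
    rw [hca2]; ring_nf
  have hfb : ∀ lam : ℝ, (cb ^ 2 + lam ^ 2)⁻¹ = (1 + lam ^ 2 + b ^ 2)⁻¹ := fun lam => by
    rw [hcb2]; ring_nf
  have hia' : IntegrableOn (fun lam : ℝ => a * (1 + lam ^ 2 + a ^ 2)⁻¹) (Ioi 0) volume := by
    rw [show (fun lam : ℝ => a * (1 + lam ^ 2 + a ^ 2)⁻¹)
        = fun lam : ℝ => a * (ca ^ 2 + lam ^ 2)⁻¹ from funext fun lam => by rw [hfa lam]]
    exact hia.const_mul a
  have hib' : IntegrableOn (fun lam : ℝ => b * (1 + lam ^ 2 + b ^ 2)⁻¹) (Ioi 0) volume := by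
    rw [show (fun lam : ℝ => b * (1 + lam ^ 2 + b ^ 2)⁻¹)
        = fun lam : ℝ => b * (cb ^ 2 + lam ^ 2)⁻¹ from funext fun lam => by rw [hfb lam]]
    exact hib.const_mul b
  -- pointwise identity
  have hpt : ∀ lam : ℝ,
      (a - b) * ((1 + lam ^ 2 - a * b) / ((1 + lam ^ 2 + a ^ 2) * (1 + lam ^ 2 + b ^ 2)))
        = a * (1 + lam ^ 2 + a ^ 2)⁻¹ - b * (1 + lam ^ 2 + b ^ 2)⁻¹ := fun lam => by
    field_simp
    ring
  have hIa : ∫ lam in Ioi (0 : ℝ), a * (1 + lam ^ 2 + a ^ 2)⁻¹ = a * (Real.pi / (2 * ca)) := by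
    rw [show (fun lam : ℝ => a * (1 + lam ^ 2 + a ^ 2)⁻¹)
        = fun lam : ℝ => a * (ca ^ 2 + lam ^ 2)⁻¹ from funext fun lam => by rw [hfa lam],
      integral_const_mul, hva]
  have hIb : ∫ lam in Ioi (0 : ℝ), b * (1 + lam ^ 2 + b ^ 2)⁻¹ = b * (Real.pi / (2 * cb)) := by
    rw [show (fun lam : ℝ => b * (1 + lam ^ 2 + b ^ 2)⁻¹)
        = fun lam : ℝ => b * (cb ^ 2 + lam ^ 2)⁻¹ from funext fun lam => by rw [hfb lam],
      integral_const_mul, hvb]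
  have key : (a - b) * ∫ lam in Ioi (0 : ℝ),
      (1 + lam ^ 2 - a * b) / ((1 + lam ^ 2 + a ^ 2) * (1 + lam ^ 2 + b ^ 2))
        = a * (Real.pi / (2 * ca)) - b * (Real.pi / (2 * cb)) := by
    rw [← integral_const_mul]
    rw [show (fun lam : ℝ => (a - b) *
        ((1 + lam ^ 2 - a * b) / ((1 + lam ^ 2 + a ^ 2) * (1 + lam ^ 2 + b ^ 2))))
        = fun lam : ℝ => a * (1 + lam ^ 2 + a ^ 2)⁻¹ - b * (1 + lam ^ 2 + b ^ 2)⁻¹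
        from funext hpt]
    rw [integral_sub hia' hib', hIa, hIb]
  have hpi : Real.pi ≠ 0 := Real.pi_ne_zero
  calc (a - b) * ((2 / Real.pi) * ∫ lam in Ioi (0 : ℝ),
        (1 + lam ^ 2 - a * b) / ((1 + lam ^ 2 + a ^ 2) * (1 + lam ^ 2 + b ^ 2)))
      = (2 / Real.pi) * ((a - b) * ∫ lam in Ioi (0 : ℝ),
        (1 + lam ^ 2 - a * b) / ((1 + lam ^ 2 + a ^ 2) * (1 + lam ^ 2 + b ^ 2))) := by ring
    _ = (2 / Real.pi) * (a * (Real.pi / (2 * ca)) - b * (Real.pi / (2 * cb))) := by rw [key]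
    _ = a / ca - b / cb := by field_simp
end

section
/- Let d ≥ 1 be an integer, R > 1, γ ≥ 0, and let ρ : ℝᵈ → ℝ be measurable with 0 ≤ ρ ≤ 1 everywhere, ρ(Z) = 1 for ‖Z‖ ≤ 1 and ρ(Z) = 0 for ‖Z‖ ≥ R. Then there exists a constant C > 0 such that for all T ≥ 1 and all s ∈ L²(ℝᵈ): (∫_{ℝᵈ} ‖Z‖^γ · exp(−T‖Z‖²/2) · ρ(Z) · |s(Z)| dZ)² ≤ C · T^{−γ} · (∫_{ℝᵈ} exp(−T‖Z‖²) ρ(Z)² dZ) · ∫_{ℝᵈ} |s(Z)|² dZ. -/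
open MeasureTheory
open scoped RealInnerProductSpace Pointwise

lemma aux_rpow_exp_bound (c : ℝ) (hc : 0 ≤ c) :
    ∃ K : ℝ, 0 < K ∧ ∀ x : ℝ, 0 ≤ x → x ^ c * Real.exp (-x) ≤ K := by
  rcases eq_or_lt_of_le hc with hc0 | hc0
  · exact ⟨1, one_pos, fun x hx => by
      rw [← hc0, Real.rpow_zero, one_mul]; exact Real.exp_le_one_iff.2 (by linarith)⟩
  · refine ⟨c ^ c * Real.exp (-c), by positivity, fun x hx => ?_⟩
    have h1 : x / c ≤ Real.exp (x / c - 1) := by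
      have := Real.add_one_le_exp (x / c - 1); linarith
    have h2 : x ≤ c * Real.exp (x / c - 1) := by
      have := mul_le_mul_of_nonneg_left h1 hc0.le
      calc x = c * (x / c) := by field_simp
        _ ≤ c * Real.exp (x / c - 1) := this
    have h3 : x ^ c ≤ (c * Real.exp (x / c - 1)) ^ c :=
      Real.rpow_le_rpow hx h2 hc
    have h4 : (c * Real.exp (x / c - 1)) ^ c = c ^ c * Real.exp (x - c) := by
      rw [Real.mul_rpow hc0.le (Real.exp_pos _).le, ← Real.exp_one_rpow (x / c - 1),
        ← Real.rpow_mul (Real.exp_pos 1).le]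
      have : (x / c - 1) * c = x - c := by field_simp
      rw [this, Real.exp_one_rpow]
    have h5 : x ^ c * Real.exp (-x) ≤ c ^ c * Real.exp (x - c) * Real.exp (-x) := by
      apply mul_le_mul_of_nonneg_right _ (Real.exp_pos _).le
      rw [← h4]; exact h3
    calc x ^ c * Real.exp (-x) ≤ c ^ c * Real.exp (x - c) * Real.exp (-x) := h5
      _ = c ^ c * Real.exp (-c) := by rw [mul_assoc, ← Real.exp_add]; ring_nf

lemma aux_integrable_gauss (d : ℕ) (b : ℝ) (hb : 0 < b) :
    Integrable (fun v : EuclideanSpace ℝ (Fin d) => Real.exp (-b * ‖v‖ ^ 2)) := by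
  have h : Integrable (fun v : EuclideanSpace ℝ (Fin d) =>
      Complex.exp (-(b : ℂ) * (‖v‖ : ℂ) ^ 2 + 0 * (⟪(0 : EuclideanSpace ℝ (Fin d)), v⟫ : ℝ))) :=
    GaussianFourier.integrable_cexp_neg_mul_sq_norm_add (by simpa using hb) 0 0
  have h2 := h.norm
  refine h2.congr (Filter.Eventually.of_forall fun v => ?_)
  simp only [Complex.norm_exp]
  congr 1
  have : (-(b : ℂ) * (‖v‖ : ℂ) ^ 2 + 0 * ((⟪(0 : EuclideanSpace ℝ (Fin d)), v⟫ : ℝ) : ℂ))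
      = ((-b * ‖v‖ ^ 2 : ℝ) : ℂ) := by push_cast; ring
  rw [this, Complex.ofReal_re]

lemma aux_ptbound (K γ : ℝ)
    (hK : ∀ x : ℝ, 0 ≤ x → x ^ γ * Real.exp (-x) ≤ K)
    (T u : ℝ) (hT : 0 < T) :
    (u ^ 2) ^ γ * Real.exp (-T * u ^ 2) ≤
      2 ^ γ * K * T ^ (-γ) * Real.exp (-T * u ^ 2 / 2) := by
  set x : ℝ := T * u ^ 2 / 2 with hxdef
  have hx : 0 ≤ x := by positivity
  have h1 : (u ^ 2 : ℝ) = (2 / T) * x := by rw [hxdef]; field_simp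
  have h2 : (u ^ 2 : ℝ) ^ γ = (2 / T) ^ γ * x ^ γ := by
    rw [h1, Real.mul_rpow (by positivity) hx]
  have h3 : Real.exp (-T * u ^ 2) = Real.exp (-x) * Real.exp (-T * u ^ 2 / 2) := by
    rw [← Real.exp_add]; congr 1; rw [hxdef]; ring
  have h4 : (2 / T : ℝ) ^ γ = 2 ^ γ * T ^ (-γ) := by
    rw [Real.div_rpow (by norm_num) hT.le, Real.rpow_neg hT.le, div_eq_mul_inv]
  calc (u ^ 2) ^ γ * Real.exp (-T * u ^ 2)
      = (2 / T) ^ γ * (x ^ γ * Real.exp (-x)) * Real.exp (-T * u ^ 2 / 2) := by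
        rw [h2, h3]; ring
    _ ≤ (2 / T) ^ γ * K * Real.exp (-T * u ^ 2 / 2) := by
        apply mul_le_mul_of_nonneg_right _ (Real.exp_pos _).le
        exact mul_le_mul_of_nonneg_left (hK x hx) (by positivity)
    _ = 2 ^ γ * K * T ^ (-γ) * Real.exp (-T * u ^ 2 / 2) := by rw [h4]; ring

set_option maxHeartbeats 1000000 in
/-- Let `ρ : ℝᵈ → ℝ` be a measurable cutoff with `0 ≤ ρ ≤ 1`, `ρ = 1` on the unit ball and
`ρ = 0` outside the ball of radius `R`, and let `γ ≥ 0`. Then there is a constant `C > 0`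
such that for all `T ≥ 1` and all `s ∈ L²(ℝᵈ)`,
`(∫ ‖Z‖^γ·exp(−T‖Z‖²/2)·ρ(Z)·|s(Z)| dZ)² ≤
  C·T^{−γ}·(∫ exp(−T‖Z‖²)ρ(Z)² dZ)·∫ |s(Z)|² dZ`. -/
theorem projection_moment_estimate (d : ℕ) (hd : 1 ≤ d) (R : ℝ) (hR : 1 < R)
    (γ : ℝ) (hγ : 0 ≤ γ)
    (ρ : EuclideanSpace ℝ (Fin d) → ℝ) (hmeas : Measurable ρ)
    (h0 : ∀ Z, 0 ≤ ρ Z) (h1 : ∀ Z, ρ Z ≤ 1)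
    (hball : ∀ Z, ‖Z‖ ≤ 1 → ρ Z = 1) (hsupp : ∀ Z, R ≤ ‖Z‖ → ρ Z = 0) :
    ∃ C : ℝ, 0 < C ∧ ∀ T : ℝ, 1 ≤ T → ∀ s : EuclideanSpace ℝ (Fin d) → ℝ,
      MemLp s 2 volume →
      (∫ Z : EuclideanSpace ℝ (Fin d),
          ‖Z‖ ^ γ * Real.exp (-T * ‖Z‖ ^ 2 / 2) * ρ Z * |s Z|) ^ 2 ≤
        C * T ^ (-γ) *
          (∫ Z : EuclideanSpace ℝ (Fin d), Real.exp (-T * ‖Z‖ ^ 2) * ρ Z ^ 2) *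
          ∫ Z : EuclideanSpace ℝ (Fin d), |s Z| ^ 2 := by
  classical
  obtain ⟨K, hKpos, hK⟩ := aux_rpow_exp_bound γ hγ
  set f₁ : EuclideanSpace ℝ (Fin d) → ℝ := fun u => Real.exp (-(1/2 : ℝ) * ‖u‖ ^ 2) with hf₁
  set f₂ : EuclideanSpace ℝ (Fin d) → ℝ := fun u => Real.exp (-(1 : ℝ) * ‖u‖ ^ 2) with hf₂
  have hint₁ : Integrable f₁ := aux_integrable_gauss d (1/2) (by norm_num)
  have hint₂ : Integrable f₂ := aux_integrable_gauss d 1 one_pos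
  set G : ℝ := ∫ u, f₁ u with hG
  have hGnn : 0 ≤ G := integral_nonneg fun u => (Real.exp_pos _).le
  set c₀ : ℝ := ∫ u in Metric.closedBall (0 : EuclideanSpace ℝ (Fin d)) 1, f₂ u with hc₀
  have hc₀pos : 0 < c₀ := by
    rw [hc₀, setIntegral_pos_iff_support_of_nonneg_ae
      (Filter.Eventually.of_forall fun u => (Real.exp_pos _).le) hint₂.integrableOn]
    have hsupp2 : Function.support f₂ = Set.univ := by
      ext u; simp [hf₂, (Real.exp_pos _).ne']
    rw [hsupp2, Set.univ_inter]
    exact Metric.measure_closedBall_pos volume 0 one_pos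
  refine ⟨2 ^ γ * K * (G + 1) / c₀, by positivity, fun T hT s hs => ?_⟩
  have hT0 : 0 < T := lt_of_lt_of_le one_pos hT
  set a : ℝ := Real.sqrt T with ha
  have ha0 : 0 < a := Real.sqrt_pos.2 hT0
  have ha1 : 1 ≤ a := by rw [ha, show (1:ℝ) = Real.sqrt 1 from (Real.sqrt_one).symm]
                         exact Real.sqrt_le_sqrt hT
  have hsq : ∀ x : EuclideanSpace ℝ (Fin d), ‖a • x‖ ^ 2 = T * ‖x‖ ^ 2 := fun x => by
    rw [norm_smul, Real.norm_eq_abs, abs_of_pos ha0, mul_pow, ha, Real.sq_sqrt hT0.le]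
  set F : EuclideanSpace ℝ (Fin d) → ℝ :=
    fun Z => ‖Z‖ ^ γ * Real.exp (-T * ‖Z‖ ^ 2 / 2) * ρ Z with hF
  have hFmeas : Measurable F := by
    have hcont : Continuous fun Z : EuclideanSpace ℝ (Fin d) =>
        ‖Z‖ ^ γ * Real.exp (-T * ‖Z‖ ^ 2 / 2) :=
      (continuous_norm.rpow_const fun x => Or.inr hγ).mul
        (((continuous_const.mul (continuous_norm.pow 2)).div_const 2).rexp)
    exact hcont.measurable.mul hmeas
  have hF0 : ∀ Z, 0 ≤ F Z := fun Z =>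
    mul_nonneg (mul_nonneg (Real.rpow_nonneg (norm_nonneg Z) γ) (Real.exp_pos _).le) (h0 Z)
  have hFle : ∀ Z, F Z ≤ R ^ γ * Real.exp (-(1/2 : ℝ) * ‖Z‖ ^ 2) := by
    intro Z
    by_cases hZ : R ≤ ‖Z‖
    · rw [hF]; simp only [hsupp Z hZ, mul_zero]; positivity
    · push_neg at hZ
      have e1 : ‖Z‖ ^ γ ≤ R ^ γ := Real.rpow_le_rpow (norm_nonneg _) hZ.le hγ
      have e2 : Real.exp (-T * ‖Z‖ ^ 2 / 2) ≤ Real.exp (-(1/2 : ℝ) * ‖Z‖ ^ 2) := by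
        apply Real.exp_le_exp.2; nlinarith [sq_nonneg ‖Z‖]
      calc F Z ≤ R ^ γ * Real.exp (-(1/2 : ℝ) * ‖Z‖ ^ 2) * 1 := by
            apply mul_le_mul (mul_le_mul e1 e2 (Real.exp_pos _).le (by positivity))
              (h1 Z) (h0 Z) (by positivity)
        _ = R ^ γ * Real.exp (-(1/2 : ℝ) * ‖Z‖ ^ 2) := mul_one _
  have hFsq_eq : ∀ Z, F Z ^ 2 = (‖Z‖ ^ 2) ^ γ * Real.exp (-T * ‖Z‖ ^ 2) * ρ Z ^ 2 := by
    intro Z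
    have e1 : (‖Z‖ ^ γ) ^ (2:ℕ) = ((‖Z‖ ^ (2:ℕ) : ℝ)) ^ γ := by
      rw [← Real.rpow_natCast ‖Z‖ 2, ← Real.rpow_natCast (‖Z‖ ^ γ) 2,
        ← Real.rpow_mul (norm_nonneg Z), ← Real.rpow_mul (norm_nonneg Z)]
      ring_nf
    have e2 : Real.exp (-T * ‖Z‖ ^ 2 / 2) ^ (2:ℕ) = Real.exp (-T * ‖Z‖ ^ 2) := by
      rw [sq, ← Real.exp_add]; congr 1; ring
    rw [hF]; simp only [mul_pow, e1, e2]
  have hkey : ∀ Z, F Z ^ 2 ≤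
      2 ^ γ * K * T ^ (-γ) * (Real.exp (-T * ‖Z‖ ^ 2 / 2) * ρ Z ^ 2) := by
    intro Z
    rw [hFsq_eq Z]
    have hpt := aux_ptbound K γ hK T ‖Z‖ hT0
    calc (‖Z‖ ^ 2) ^ γ * Real.exp (-T * ‖Z‖ ^ 2) * ρ Z ^ 2
        ≤ 2 ^ γ * K * T ^ (-γ) * Real.exp (-T * ‖Z‖ ^ 2 / 2) * ρ Z ^ 2 :=
          mul_le_mul_of_nonneg_right hpt (by positivity)
      _ = 2 ^ γ * K * T ^ (-γ) * (Real.exp (-T * ‖Z‖ ^ 2 / 2) * ρ Z ^ 2) := by ring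
  -- integrability facts
  have hρsq : ∀ Z, ρ Z ^ 2 ≤ 1 := fun Z => by nlinarith [h0 Z, h1 Z]
  have hFsq_int : Integrable (fun Z => F Z ^ 2) := by
    apply Integrable.mono' (hint₂.const_mul ((R ^ γ) ^ 2))
      ((hFmeas.pow_const 2).aestronglyMeasurable)
    refine Filter.Eventually.of_forall fun Z => ?_
    rw [Real.norm_eq_abs, abs_of_nonneg (sq_nonneg _)]
    calc F Z ^ 2 ≤ (R ^ γ * Real.exp (-(1/2 : ℝ) * ‖Z‖ ^ 2)) ^ 2 :=
          pow_le_pow_left₀ (hF0 Z) (hFle Z) 2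
      _ = (R ^ γ) ^ 2 * f₂ Z := by
          rw [mul_pow, hf₂]; congr 1
          rw [sq, ← Real.exp_add]; congr 1; ring
  have hInt1 : Integrable (fun Z => Real.exp (-T * ‖Z‖ ^ 2 / 2) * ρ Z ^ 2) := by
    apply Integrable.mono' hint₁
      (((((measurable_norm.pow_const 2).const_mul (-T)).div_const 2).exp.mul
        (hmeas.pow_const 2)).aestronglyMeasurable)
    refine Filter.Eventually.of_forall fun Z => ?_
    rw [Real.norm_eq_abs]; simp only [Pi.mul_apply]
    rw [abs_of_nonneg (mul_nonneg (Real.exp_pos _).le (sq_nonneg _))]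
    calc Real.exp (-T * ‖Z‖ ^ 2 / 2) * ρ Z ^ 2 ≤ Real.exp (-T * ‖Z‖ ^ 2 / 2) * 1 :=
          mul_le_mul_of_nonneg_left (hρsq Z) (Real.exp_pos _).le
      _ = Real.exp (-T * ‖Z‖ ^ 2 / 2) := mul_one _
      _ ≤ f₁ Z := by
          rw [hf₁]; apply Real.exp_le_exp.2; nlinarith [sq_nonneg ‖Z‖]
  have hInt2 : Integrable (fun Z => Real.exp (-T * ‖Z‖ ^ 2) * ρ Z ^ 2) := by
    apply Integrable.mono' hint₂
      ((((measurable_norm.pow_const 2).const_mul (-T)).exp.mul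
        (hmeas.pow_const 2)).aestronglyMeasurable)
    refine Filter.Eventually.of_forall fun Z => ?_
    rw [Real.norm_eq_abs]; simp only [Pi.mul_apply]
    rw [abs_of_nonneg (mul_nonneg (Real.exp_pos _).le (sq_nonneg _))]
    calc Real.exp (-T * ‖Z‖ ^ 2) * ρ Z ^ 2 ≤ Real.exp (-T * ‖Z‖ ^ 2) * 1 :=
          mul_le_mul_of_nonneg_left (hρsq Z) (Real.exp_pos _).le
      _ = Real.exp (-T * ‖Z‖ ^ 2) := mul_one _
      _ ≤ f₂ Z := by
          rw [hf₂]; apply Real.exp_le_exp.2; nlinarith [sq_nonneg ‖Z‖]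
  have hexpT2 : Integrable (fun Z : EuclideanSpace ℝ (Fin d) =>
      Real.exp (-T * ‖Z‖ ^ 2 / 2)) := by
    have h := aux_integrable_gauss d (T/2) (by positivity)
    have he : (fun Z : EuclideanSpace ℝ (Fin d) => Real.exp (-(T/2) * ‖Z‖ ^ 2))
        = fun Z : EuclideanSpace ℝ (Fin d) => Real.exp (-T * ‖Z‖ ^ 2 / 2) := by
      funext Z; congr 1; ring
    rwa [he] at h
  have hexpT : Integrable (fun Z : EuclideanSpace ℝ (Fin d) =>
      Real.exp (-T * ‖Z‖ ^ 2)) := aux_integrable_gauss d T hT0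
  -- upper bound for the half-Gaussian mass
  have hU : (∫ Z, Real.exp (-T * ‖Z‖ ^ 2 / 2) * ρ Z ^ 2) ≤ (a ^ d)⁻¹ * (G + 1) := by
    calc (∫ Z, Real.exp (-T * ‖Z‖ ^ 2 / 2) * ρ Z ^ 2)
        ≤ ∫ Z, (Metric.closedBall (0 : EuclideanSpace ℝ (Fin d)) R).indicator
            (fun Z => Real.exp (-T * ‖Z‖ ^ 2 / 2)) Z := by
          apply integral_mono hInt1 (hexpT2.indicator Metric.isClosed_closedBall.measurableSet)
          intro Z
          show Real.exp (-T * ‖Z‖ ^ 2 / 2) * ρ Z ^ 2 ≤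
            (Metric.closedBall (0 : EuclideanSpace ℝ (Fin d)) R).indicator
              (fun Z => Real.exp (-T * ‖Z‖ ^ 2 / 2)) Z
          by_cases hZ : Z ∈ Metric.closedBall (0 : EuclideanSpace ℝ (Fin d)) R
          · rw [Set.indicator_of_mem hZ]
            calc Real.exp (-T * ‖Z‖ ^ 2 / 2) * ρ Z ^ 2
                ≤ Real.exp (-T * ‖Z‖ ^ 2 / 2) * 1 :=
                  mul_le_mul_of_nonneg_left (hρsq Z) (Real.exp_pos _).le
              _ = _ := mul_one _
          · rw [Set.indicator_of_notMem hZ]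
            have : R ≤ ‖Z‖ := by
              rw [Metric.mem_closedBall, dist_zero_right] at hZ; linarith [not_le.1 hZ]
            rw [hsupp Z this]
            simp
      _ = ∫ x in Metric.closedBall (0 : EuclideanSpace ℝ (Fin d)) R,
            Real.exp (-T * ‖x‖ ^ 2 / 2) :=
          integral_indicator Metric.isClosed_closedBall.measurableSet
      _ = ∫ x in Metric.closedBall (0 : EuclideanSpace ℝ (Fin d)) R, f₁ (a • x) := by
          refine setIntegral_congr_fun Metric.isClosed_closedBall.measurableSet fun x _ => ?_
          rw [hf₁]; simp only; congr 1; rw [hsq x]; ring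
      _ = (a ^ d)⁻¹ * ∫ x in a • Metric.closedBall (0 : EuclideanSpace ℝ (Fin d)) R, f₁ x := by
          rw [Measure.setIntegral_comp_smul_of_pos volume f₁ _ ha0, finrank_euclideanSpace_fin,
            smul_eq_mul]
      _ ≤ (a ^ d)⁻¹ * (G + 1) := by
          apply mul_le_mul_of_nonneg_left _ (by positivity)
          calc (∫ x in a • Metric.closedBall (0 : EuclideanSpace ℝ (Fin d)) R, f₁ x)
              ≤ ∫ x, f₁ x := setIntegral_le_integral hint₁
                (Filter.Eventually.of_forall fun u => (Real.exp_pos _).le)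
            _ = G := hG.symm
            _ ≤ G + 1 := by linarith
  -- lower bound for the Gaussian mass
  have hL : (a ^ d)⁻¹ * c₀ ≤ ∫ Z, Real.exp (-T * ‖Z‖ ^ 2) * ρ Z ^ 2 := by
    have hsub : Metric.closedBall (0 : EuclideanSpace ℝ (Fin d)) 1 ⊆
        a • Metric.closedBall (0 : EuclideanSpace ℝ (Fin d)) 1 := by
      intro x hx
      rw [Set.mem_smul_set_iff_inv_smul_mem₀ (ne_of_gt ha0)]
      rw [Metric.mem_closedBall, dist_zero_right] at hx ⊢
      rw [norm_smul, Real.norm_eq_abs, abs_of_pos (inv_pos.2 ha0)]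
      calc a⁻¹ * ‖x‖ ≤ a⁻¹ * a :=
            mul_le_mul_of_nonneg_left (le_trans hx ha1) (inv_pos.2 ha0).le
        _ = 1 := inv_mul_cancel₀ (ne_of_gt ha0)
    calc (a ^ d)⁻¹ * c₀
        ≤ (a ^ d)⁻¹ * ∫ x in a • Metric.closedBall (0 : EuclideanSpace ℝ (Fin d)) 1, f₂ x := by
          apply mul_le_mul_of_nonneg_left _ (by positivity)
          rw [hc₀]
          exact setIntegral_mono_set hint₂.integrableOn
            (Filter.Eventually.of_forall fun u => (Real.exp_pos _).le)
            (HasSubset.Subset.eventuallyLE hsub)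
      _ = ∫ x in Metric.closedBall (0 : EuclideanSpace ℝ (Fin d)) 1, f₂ (a • x) := by
          rw [Measure.setIntegral_comp_smul_of_pos volume f₂ _ ha0, finrank_euclideanSpace_fin,
            smul_eq_mul]
      _ = ∫ x in Metric.closedBall (0 : EuclideanSpace ℝ (Fin d)) 1,
            Real.exp (-T * ‖x‖ ^ 2) := by
          refine setIntegral_congr_fun Metric.isClosed_closedBall.measurableSet fun x _ => ?_
          rw [hf₂]; simp only; congr 1; rw [hsq x]; ring
      _ = ∫ Z, (Metric.closedBall (0 : EuclideanSpace ℝ (Fin d)) 1).indicator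
            (fun Z => Real.exp (-T * ‖Z‖ ^ 2)) Z :=
          (integral_indicator Metric.isClosed_closedBall.measurableSet).symm
      _ ≤ ∫ Z, Real.exp (-T * ‖Z‖ ^ 2) * ρ Z ^ 2 := by
          apply integral_mono (hexpT.indicator Metric.isClosed_closedBall.measurableSet) hInt2
          intro Z
          show (Metric.closedBall (0 : EuclideanSpace ℝ (Fin d)) 1).indicator
              (fun Z => Real.exp (-T * ‖Z‖ ^ 2)) Z ≤ Real.exp (-T * ‖Z‖ ^ 2) * ρ Z ^ 2
          by_cases hZ : Z ∈ Metric.closedBall (0 : EuclideanSpace ℝ (Fin d)) 1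
          · rw [Set.indicator_of_mem hZ]
            have := hball Z (by rw [Metric.mem_closedBall, dist_zero_right] at hZ; exact hZ)
            rw [this]; simp
          · rw [Set.indicator_of_notMem hZ]
            exact mul_nonneg (Real.exp_pos _).le (sq_nonneg _)
  -- Cauchy-Schwarz
  have hpq : Real.HolderConjugate 2 2 := Real.HolderConjugate.two_two
  have o2 : ENNReal.ofReal (2:ℝ) = 2 := by norm_num
  have hFmem : MemLp F (ENNReal.ofReal (2:ℝ)) volume := by
    rw [o2]
    exact (memLp_two_iff_integrable_sq hFmeas.aestronglyMeasurable).2 hFsq_int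
  have hsmem : MemLp (fun Z => |s Z|) (ENNReal.ofReal (2:ℝ)) volume := by
    rw [o2]
    simpa [Real.norm_eq_abs] using hs.norm
  have hCS := integral_mul_le_Lp_mul_Lq_of_nonneg hpq
    (Filter.Eventually.of_forall hF0)
    (Filter.Eventually.of_forall fun Z => abs_nonneg (s Z)) hFmem hsmem
  have erpow : ∀ g : EuclideanSpace ℝ (Fin d) → ℝ,
      (fun Z => g Z ^ (2:ℝ)) = fun Z => g Z ^ (2:ℕ) := fun g =>
    funext fun Z => Real.rpow_two (g Z)
  rw [erpow F, erpow (fun Z => |s Z|)] at hCS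
  have hA : 0 ≤ ∫ Z, F Z ^ 2 := integral_nonneg fun Z => sq_nonneg _
  have hB : 0 ≤ ∫ Z, |s Z| ^ 2 := integral_nonneg fun Z => sq_nonneg _
  have hLHSnn : 0 ≤ ∫ Z, F Z * |s Z| :=
    integral_nonneg fun Z => mul_nonneg (hF0 Z) (abs_nonneg _)
  have sq_ineq : (∫ Z, F Z * |s Z|) ^ 2 ≤ (∫ Z, F Z ^ 2) * ∫ Z, |s Z| ^ 2 := by
    calc (∫ Z, F Z * |s Z|) ^ 2
        ≤ ((∫ Z, F Z ^ 2) ^ ((1:ℝ)/2) * (∫ Z, |s Z| ^ 2) ^ ((1:ℝ)/2)) ^ 2 :=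
          pow_le_pow_left₀ hLHSnn hCS 2
      _ = (∫ Z, F Z ^ 2) * ∫ Z, |s Z| ^ 2 := by
          rw [mul_pow, ← Real.rpow_natCast ((∫ Z, F Z ^ 2) ^ ((1:ℝ)/2)) 2,
            ← Real.rpow_natCast ((∫ Z, |s Z| ^ 2) ^ ((1:ℝ)/2)) 2,
            ← Real.rpow_mul hA, ← Real.rpow_mul hB]
          norm_num
  -- main estimate on ∫ F²
  have key2 : (∫ Z, F Z ^ 2) ≤
      2 ^ γ * K * (G + 1) / c₀ * T ^ (-γ) * ∫ Z, Real.exp (-T * ‖Z‖ ^ 2) * ρ Z ^ 2 := by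
    have hTγ : (0:ℝ) ≤ T ^ (-γ) := Real.rpow_nonneg hT0.le _
    calc (∫ Z, F Z ^ 2)
        ≤ ∫ Z, 2 ^ γ * K * T ^ (-γ) * (Real.exp (-T * ‖Z‖ ^ 2 / 2) * ρ Z ^ 2) :=
          integral_mono hFsq_int (hInt1.const_mul _) hkey
      _ = 2 ^ γ * K * T ^ (-γ) * ∫ Z, Real.exp (-T * ‖Z‖ ^ 2 / 2) * ρ Z ^ 2 :=
          integral_const_mul _ _
      _ ≤ 2 ^ γ * K * T ^ (-γ) * ((a ^ d)⁻¹ * (G + 1)) := by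
          apply mul_le_mul_of_nonneg_left hU (by positivity)
      _ = 2 ^ γ * K * (G + 1) / c₀ * T ^ (-γ) * ((a ^ d)⁻¹ * c₀) := by
          field_simp
      _ ≤ 2 ^ γ * K * (G + 1) / c₀ * T ^ (-γ) *
            ∫ Z, Real.exp (-T * ‖Z‖ ^ 2) * ρ Z ^ 2 := by
          apply mul_le_mul_of_nonneg_left hL (by positivity)
  calc (∫ Z, F Z * |s Z|) ^ 2 ≤ (∫ Z, F Z ^ 2) * ∫ Z, |s Z| ^ 2 := sq_ineq
    _ ≤ 2 ^ γ * K * (G + 1) / c₀ * T ^ (-γ) *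
          (∫ Z, Real.exp (-T * ‖Z‖ ^ 2) * ρ Z ^ 2) * ∫ Z, |s Z| ^ 2 :=
        mul_le_mul_of_nonneg_right key2 hB
end
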